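/- Let Δ be a simplicial complex on [n] with no free face. Then for every face F ∈ Δ and every l ∈ [n] with l ∉ F, there exists a facet G of Δ such that F ⊆ G and l ∉ G. -/

import Mathlib

/-- A simplicial complex on `[n]`: contains `∅` and is closed under taking subsets. -/
def IsSimplicialComplex {n : ℕ} (Δ : Set (Finset (Fin n))) : Prop :=
  ∅ ∈ Δ ∧ ∀ F ∈ Δ, ∀ G, G ⊆ F → G ∈ Δ

/-- A facet: a face maximal with respect to inclusion. -/
def IsFacet {n : ℕ} (Δ : Set (Finset (Fin n))) (G : Finset (Fin n)) : Prop :=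
  G ∈ Δ ∧ ∀ H ∈ Δ, G ⊆ H → H = G

/-- A free face: a face `F` such that `F ∪ {i}` is a facet for some `i ∉ F` and
`F ∪ {i}` is the unique facet containing `F`. -/
def IsFreeFace {n : ℕ} (Δ : Set (Finset (Fin n))) (F : Finset (Fin n)) : Prop :=
  F ∈ Δ ∧ ∃ i ∉ F, IsFacet Δ (insert i F) ∧
    ∀ G, IsFacet Δ G → F ⊆ G → G = insert i F

/-! Let `F'` be a face containing `F` that is maximal among the faces avoiding `l`. If every
facet containing `F` contained `l`, then every facet `G ⊇ F'` would be `insert l F'`, since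
`G.erase l` is a face avoiding `l` that contains `F'`; so `F'` would be a free face. -/

section

variable {n : ℕ} {Δ : Set (Finset (Fin n))}

lemma isFacet_iff_maximal {G : Finset (Fin n)} : IsFacet Δ G ↔ Maximal (· ∈ Δ) G :=
  and_congr_right'
    ⟨fun h _ hH hGH => (h _ hH hGH).le, fun h _ hH hGH => (h hH hGH).antisymm hGH⟩

lemma exists_isFacet_superset {F : Finset (Fin n)} (hF : F ∈ Δ) :
    ∃ G, IsFacet Δ G ∧ F ⊆ G := by
  obtain ⟨G, hFG, hG⟩ := Finite.exists_le_maximal hF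
  exact ⟨G, isFacet_iff_maximal.2 hG, hFG⟩

lemma IsFacet.eq_insert_of_maximal_notMem (hΔ : IsSimplicialComplex Δ) {F G : Finset (Fin n)}
    {l : Fin n} (hF : Maximal (fun H => H ∈ Δ ∧ l ∉ H) F) (hG : IsFacet Δ G) (hFG : F ⊆ G)
    (hlG : l ∈ G) : G = insert l F := by
  have hF_le : F ⊆ G.erase l := fun x hx =>
    Finset.mem_erase.2 ⟨fun h => hF.prop.2 (h ▸ hx), hFG hx⟩
  have herase : G.erase l = F :=
    hF.eq_of_ge ⟨hΔ.2 G hG.1 _ (Finset.erase_subset l G), Finset.notMem_erase l G⟩ hF_le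
  rw [← herase, Finset.insert_erase hlG]

lemma isFreeFace_of_maximal_notMem (hΔ : IsSimplicialComplex Δ) {F : Finset (Fin n)}
    {l : Fin n} (hF : Maximal (fun H => H ∈ Δ ∧ l ∉ H) F)
    (hl : ∀ G, IsFacet Δ G → F ⊆ G → l ∈ G) : IsFreeFace Δ F := by
  have hunique : ∀ G, IsFacet Δ G → F ⊆ G → G = insert l F := fun G hG hFG =>
    hG.eq_insert_of_maximal_notMem hΔ hF hFG (hl G hG hFG)
  obtain ⟨G, hG, hFG⟩ := exists_isFacet_superset hF.prop.1
  exact ⟨hF.prop.1, l, hF.prop.2, hunique G hG hFG ▸ hG, hunique⟩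

end

/-- If Δ has no free face, then for every face `F` and `l ∉ F` there is a
facet `G ⊇ F` with `l ∉ G`. -/
theorem stmt_6 {n : ℕ} (Δ : Set (Finset (Fin n))) (hΔ : IsSimplicialComplex Δ)
    (hfree : ¬ ∃ F, IsFreeFace Δ F) :
    ∀ F ∈ Δ, ∀ l : Fin n, l ∉ F → ∃ G, IsFacet Δ G ∧ F ⊆ G ∧ l ∉ G := by
  intro F hF l hl
  obtain ⟨F', hFF', hF'⟩ :=
    Finite.exists_le_maximal (p := fun H => H ∈ Δ ∧ l ∉ H) ⟨hF, hl⟩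
  by_contra! hl_mem
  exact hfree ⟨F', isFreeFace_of_maximal_notMem hΔ hF' fun G hG hF'G =>
    hl_mem G hG (hFF'.trans hF'G)⟩
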